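/- arXiv:0801.3624 — 4 statements merged into one kernel-verified Lean document; each statement's English description precedes it below -/
import Mathlib

section
/- For every integer k ≥ 2, every integer n ≥ 1, and every probability distribution μ on ({0,1}^n)^k, the k-party discrepancy of the Disjointness function satisfies disc_{k,μ}(DISJ_k) ≥ 1/(2n+1). (In particular disc_{k,μ}(DISJ_k) = Ω(1/n) under every distribution.) -/
/-!
The constant cylinder intersection sees the bias `1 - 2P` of `DISJ_k`, where `P` is the
`μ`-probability that the inputs intersect. For each index `j`, the event "all players have
a `1` at `j`" is a cylinder intersection (player `i` checks the other players' bits), on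
which `DISJ_k` is constantly `-1`; so each of these `n` events has probability at most
`disc`, and by the union bound `P ≤ n · disc`. Hence `1 ≤ disc + 2P ≤ (2n + 1) · disc`.
-/

open scoped BigOperators

/-- A `k`-cylinder in the `i`-th dimension: its value does not depend on the
`i`-th coordinate. -/
def IsCylinder {k : ℕ} {W : Type*} (i : Fin k) (ψ : (Fin k → W) → Bool) : Prop :=
  ∀ y y' : Fin k → W, (∀ j, j ≠ i → y j = y' j) → ψ y = ψ y'

/-- A cylinder intersection: the pointwise product (conjunction) of cylinders in
dimensions `1, …, k`. -/
def IsCylinderIntersection {k : ℕ} {W : Type*} (φ : (Fin k → W) → Bool) : Prop :=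
  ∃ ψ : Fin k → ((Fin k → W) → Bool),
    (∀ i, IsCylinder i (ψ i)) ∧ ∀ y, φ y = decide (∀ i, ψ i y = true)

/-- Interpret a boolean (the value of a cylinder intersection) as the real `0` or `1`. -/
noncomputable def bval (b : Bool) : ℝ := if b then 1 else 0

/-- A probability distribution on a finite set. -/
def IsProbDist {D : Type*} [Fintype D] (μ : D → ℝ) : Prop :=
  (∀ x, 0 ≤ μ x) ∧ ∑ x, μ x = 1

/-- `disc_{k,μ}(f)`: the supremum over cylinder intersections `φ` of
`|E_{y∼μ}[f(y)φ(y)]|`. -/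
noncomputable def disc {k : ℕ} {W : Type*} [Fintype W]
    (μ : (Fin k → W) → ℝ) (f : (Fin k → W) → ℝ) : ℝ :=
  sSup { t | ∃ φ, IsCylinderIntersection φ ∧ t = |∑ y, μ y * f y * bval (φ y)| }

/-- The `k`-party Disjointness function on `({0,1}^n)^k`, with values in `{-1,1}`:
`-1` iff some index `j` has `y^1_j = ⋯ = y^k_j = 1`. -/
noncomputable def DISJ (k n : ℕ) (y : Fin k → Fin n → Bool) : ℝ :=
  if ∃ j : Fin n, ∀ i : Fin k, y i j = true then -1 else 1

open Finset

section CylinderIntersection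

variable {k : ℕ} {W : Type*}

lemma isCylinderIntersection_true : IsCylinderIntersection (fun _ : Fin k → W => true) :=
  ⟨fun _ _ => true, fun _ _ _ _ => rfl, fun _ => by simp⟩

lemma isCylinderIntersection_forall (hk : 2 ≤ k) (p : W → Prop) [DecidablePred p] :
    IsCylinderIntersection (fun y : Fin k → W => decide (∀ i, p (y i))) := by
  have : Nontrivial (Fin k) := Fin.nontrivial_iff_two_le.mpr hk
  refine ⟨fun i y => decide (∀ i', i' ≠ i → p (y i')), fun i y y' hyy' => ?_, fun y => ?_⟩
  · simp only [decide_eq_decide]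
    exact forall₂_congr fun i' hi' => by rw [hyy' i' hi']
  · simp only [decide_eq_decide, decide_eq_true_eq]
    refine ⟨fun h i i' _ => h i', fun h i' => ?_⟩
    obtain ⟨i, hi⟩ := exists_ne i'
    exact h i i' hi.symm

variable [Fintype W]

lemma abs_sum_le_disc (μ f : (Fin k → W) → ℝ) {φ : (Fin k → W) → Bool}
    (hφ : IsCylinderIntersection φ) : |∑ y, μ y * f y * bval (φ y)| ≤ disc μ f := by
  refine le_csSup ⟨∑ y, |μ y * f y|, ?_⟩ ⟨φ, hφ, rfl⟩
  rintro t ⟨ψ, -, rfl⟩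
  refine (abs_sum_le_sum_abs _ _).trans (sum_le_sum fun y _ => ?_)
  rw [abs_mul]
  refine mul_le_of_le_one_right (abs_nonneg _) ?_
  unfold bval
  split <;> simp

end CylinderIntersection

lemma sum_filter_exists_le_sum_sum_filter {α ι M : Type*} [Fintype α] [Fintype ι]
    [AddCommMonoid M] [PartialOrder M] [IsOrderedAddMonoid M] {μ : α → M} (hμ : ∀ x, 0 ≤ μ x)
    (A : ι → α → Prop) [∀ j, DecidablePred (A j)] [DecidablePred fun x => ∃ j, A j x] :
    ∑ x with ∃ j, A j x, μ x ≤ ∑ j, ∑ x with A j x, μ x := by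
  have hite : ∀ x j, 0 ≤ if A j x then μ x else 0 := fun x j => by
    split
    · exact hμ x
    · exact le_rfl
  calc ∑ x with ∃ j, A j x, μ x
      ≤ ∑ x with ∃ j, A j x, ∑ j, if A j x then μ x else 0 := by
        refine sum_le_sum fun x hx => ?_
        obtain ⟨j, hj⟩ := (mem_filter.1 hx).2
        calc μ x = if A j x then μ x else 0 := (if_pos hj).symm
          _ ≤ _ := single_le_sum (fun j _ => hite x j) (mem_univ j)
    _ ≤ ∑ x, ∑ j, if A j x then μ x else 0 :=
        sum_le_sum_of_subset_of_nonneg (filter_subset _ _)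
          fun x _ _ => sum_nonneg fun j _ => hite x j
    _ = ∑ j, ∑ x with A j x, μ x := by
        rw [sum_comm]
        simp only [sum_filter]

section Disjointness

variable {k n : ℕ} (μ : (Fin k → Fin n → Bool) → ℝ)

lemma sum_mul_DISJ :
    ∑ y, μ y * DISJ k n y = ∑ y, μ y - 2 * ∑ y with ∃ j, ∀ i, y i j = true, μ y := by
  rw [sum_filter, mul_sum, ← sum_sub_distrib]
  refine sum_congr rfl fun y _ => ?_
  unfold DISJ
  split <;> ring

lemma sum_mul_DISJ_mul_bval (j : Fin n) :
    ∑ y, μ y * DISJ k n y * bval (decide (∀ i, y i j = true)) =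
      -∑ y with ∀ i, y i j = true, μ y := by
  rw [sum_filter, ← sum_neg_distrib]
  refine sum_congr rfl fun y _ => ?_
  by_cases h : ∀ i, y i j = true
  · simp [h, DISJ, bval, show ∃ j, ∀ i, y i j = true from ⟨j, h⟩]
  · simp [h, bval]

end Disjointness

theorem statement0_general (k n : ℕ) (hk : 2 ≤ k)
    (μ : (Fin k → Fin n → Bool) → ℝ) (hμ : IsProbDist μ) :
    (1 : ℝ) / (2 * n + 1) ≤ disc μ (DISJ k n) := by
  obtain ⟨hμ0, hμ1⟩ := hμ
  set d := disc μ (DISJ k n)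
  set P := ∑ y with ∃ j, ∀ i, y i j = true, μ y
  have hbias : 1 - 2 * P ≤ d := by
    have := (le_abs_self _).trans (abs_sum_le_disc μ (DISJ k n) isCylinderIntersection_true)
    simpa only [bval, if_true, mul_one, sum_mul_DISJ, hμ1] using this
  have hcoord : ∀ j, ∑ y with ∀ i, y i j = true, μ y ≤ d := fun j => by
    have := abs_sum_le_disc μ (DISJ k n) (isCylinderIntersection_forall hk (· j = true))
    rwa [sum_mul_DISJ_mul_bval, abs_neg, abs_of_nonneg (sum_nonneg fun y _ => hμ0 y)] at this
  have hunion : P ≤ n * d :=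
    calc P ≤ ∑ j, ∑ y with ∀ i, y i j = true, μ y :=
          sum_filter_exists_le_sum_sum_filter hμ0 fun j y => ∀ i, y i j = true
      _ ≤ ∑ _j : Fin n, d := sum_le_sum fun j _ => hcoord j
      _ = n * d := by simp
  rw [div_le_iff₀ (by positivity)]
  linarith

/-- Under every distribution `μ`, `disc_{k,μ}(DISJ_k) ≥ 1/(2n+1)`. -/
theorem statement0 (k n : ℕ) (hk : 2 ≤ k) (hn : 1 ≤ n)
    (μ : (Fin k → Fin n → Bool) → ℝ) (hμ : IsProbDist μ) :
    (1 : ℝ) / (2 * n + 1) ≤ disc μ (DISJ k n) :=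
  statement0_general k n hk μ hμ
end

section
/- Let k ≥ 2 and ℓ, m ≥ 1 be integers and n = ℓ^{k−1}m. There exist functions Γ_1,…,Γ_{k−1} : [ℓ]^m → {0,1}^n such that for every f : {0,1}^m → {−1,1} and f' : {0,1}^n → {−1,1} satisfying f(z) = f'(z0^{n−m}) for all z ∈ {0,1}^m, and for every x ∈ {0,1}^n and S^1,…,S^{k−1} ∈ [ℓ]^m, one has F^f_k(x, S^1,…,S^{k−1}) = G^{f'}_k(x, Γ_1(S^1),…,Γ_{k−1}(S^{k−1})). -/
/-!
Take `Γ_i(s)` to be the indicator of the positions `(α, v)` (block `α`, multi-index `v ∈ [ℓ]^{k-1}`)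
with `v_i = s(α)`. The all-one columns of the matrix with rows `Γ_1(S^1), …, Γ_{k-1}(S^{k-1})` are
then exactly the positions `(α, (S^1[α], …, S^{k-1}[α]))`, one per block, and they increase with `α`
because the blocks are laid out consecutively. Hence `x ⇐ Γ(S)` is `x ← S` followed by zeros, and the
hypothesis `f(z) = f'(z0^{n-m})` concludes.
-/

open scoped BigOperators

/-- Pad an `m`-bit string with zeros to get an `n`-bit string `z0^{n-m}`. -/
def padZ (m n : ℕ) (z : Fin m → Bool) : Fin n → Bool :=
  fun j => if h : (j : ℕ) < m then z ⟨j, h⟩ else false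

/-- `x ⇐ y^1,…,y^{K}`: the `n`-bit string `x_{i_1} x_{i_2} ⋯ x_{i_t} 0^{n-t}`,
where `i_1 < ⋯ < i_t` are the indices of the all-one columns of the matrix whose
rows are `y^1,…,y^{K}`. -/
def compress (n K : ℕ) (x : Fin n → Bool) (y : Fin K → Fin n → Bool) : Fin n → Bool :=
  fun p =>
    let L := (Finset.univ.filter (fun j : Fin n => ∀ i : Fin K, y i j = true)).sort (· ≤ ·)
    if h : (p : ℕ) < L.length then x (L.get ⟨p, h⟩) else false

/-- `x ← S^1,…,S^{k-1}` for `x ∈ {0,1}^n` with `n = ℓ^{k-1}·m`, viewing `x` as `m`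
consecutive blocks, each a `(k-1)`-dimensional array of side `ℓ` (block index is the
major index); the `α`-th bit of the result is `x[α][S^1[α],…,S^{k-1}[α]]`. -/
def maskFlat (k ℓ m n : ℕ) (hn : n = ℓ ^ (k - 1) * m)
    (x : Fin n → Bool) (S : Fin (k - 1) → Fin m → Fin ℓ) : Fin m → Bool :=
  fun α =>
    x (Fin.cast (show m * ℓ ^ (k - 1) = n by rw [hn]; exact Nat.mul_comm _ _)
        (finProdFinEquiv (α, finFunctionFinEquiv (fun i => S i α))))

theorem StrictMono.sort_map_univ {α : Type*} [LinearOrder α] {m : ℕ} {e : Fin m → α}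
    (he : StrictMono e) : (Finset.univ.map ⟨e, he.injective⟩).sort (· ≤ ·) = List.ofFn e := by
  rw [← (he.strictMonoOn (Finset.univ : Finset (Fin m))).map_finsetSort, Fin.sort_univ,
    List.ofFn_eq_map]
  rfl

theorem compress_eq_padZ_of_strictMono {n K m : ℕ} (x : Fin n → Bool) (y : Fin K → Fin n → Bool)
    (e : Fin m → Fin n) (he : StrictMono e) (hcols : ∀ j, (∀ i, y i j = true) ↔ j ∈ Set.range e) :
    compress n K x y = padZ m n (x ∘ e) := by
  have hsort : (Finset.univ.filter fun j => ∀ i, y i j = true).sort (· ≤ ·) = List.ofFn e := by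
    rw [← he.sort_map_univ]
    congr 1
    ext j
    simp [hcols]
  funext p
  simp only [compress, padZ, hsort, List.length_ofFn, List.get_eq_getElem, List.getElem_ofFn,
    Function.comp_apply]

theorem strictMono_finProdFinEquiv_pair {m n : ℕ} (g : Fin m → Fin n) :
    StrictMono fun a => finProdFinEquiv (a, g a) := by
  intro a b hab
  rw [Fin.lt_def, finProdFinEquiv_apply_val, finProdFinEquiv_apply_val]
  calc (g a : ℕ) + n * a < n * (a + 1) := by rw [mul_add, mul_one]; have := (g a).isLt; omega
    _ ≤ n * b := Nat.mul_le_mul_left _ hab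
    _ ≤ g b + n * b := Nat.le_add_left _ _

section Blocks

variable {K ℓ m n : ℕ} (hc : m * ℓ ^ K = n)

def blockEquiv : Fin m × (Fin K → Fin ℓ) ≃ Fin n :=
  ((Equiv.refl _).prodCongr finFunctionFinEquiv).trans (finProdFinEquiv.trans (finCongr hc))

def blockPos (S : Fin K → Fin m → Fin ℓ) (α : Fin m) : Fin n :=
  blockEquiv hc (α, fun i => S i α)

def blockSelector (i : Fin K) (s : Fin m → Fin ℓ) (p : Fin n) : Bool :=
  decide (((blockEquiv hc).symm p).2 i = s ((blockEquiv hc).symm p).1)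

theorem blockPos_strictMono (S : Fin K → Fin m → Fin ℓ) : StrictMono (blockPos hc S) :=
  fun _ _ hab => strictMono_finProdFinEquiv_pair (fun α => finFunctionFinEquiv fun i => S i α) hab

theorem forall_blockSelector_iff (S : Fin K → Fin m → Fin ℓ) (p : Fin n) :
    (∀ i, blockSelector hc i (S i) p = true) ↔ p ∈ Set.range (blockPos hc S) := by
  obtain ⟨⟨α, v⟩, rfl⟩ := (blockEquiv hc).surjective p
  simp only [blockSelector, blockPos, Equiv.symm_apply_apply, decide_eq_true_eq, Set.mem_range,
    (blockEquiv hc).injective.eq_iff, Prod.mk.injEq]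
  constructor
  · intro h
    exact ⟨α, rfl, funext fun i => (h i).symm⟩
  · rintro ⟨_, rfl, rfl⟩ i
    rfl

end Blocks

theorem maskFlat_eq_comp_blockPos (k ℓ m n : ℕ) (hn : n = ℓ ^ (k - 1) * m) (x : Fin n → Bool)
    (S : Fin (k - 1) → Fin m → Fin ℓ) :
    maskFlat k ℓ m n hn x S = x ∘ blockPos (by rw [hn, Nat.mul_comm]) S := rfl

theorem statement2_general (k ℓ m : ℕ)
    (n : ℕ) (hn : n = ℓ ^ (k - 1) * m) :
    ∃ Γ : Fin (k - 1) → (Fin m → Fin ℓ) → (Fin n → Bool),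
      ∀ (f : (Fin m → Bool) → ℝ) (f' : (Fin n → Bool) → ℝ),
        (∀ z, f z = 1 ∨ f z = -1) → (∀ w, f' w = 1 ∨ f' w = -1) →
        (∀ z, f z = f' (padZ m n z)) →
        ∀ (x : Fin n → Bool) (S : Fin (k - 1) → Fin m → Fin ℓ),
          f (maskFlat k ℓ m n hn x S) = f' (compress n (k - 1) x (fun i => Γ i (S i))) := by
  have hc : m * ℓ ^ (k - 1) = n := by rw [hn, Nat.mul_comm]
  refine ⟨blockSelector hc, fun f f' _ _ hff x S => ?_⟩
  rw [compress_eq_padZ_of_strictMono x _ _ (blockPos_strictMono hc S)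
    (forall_blockSelector_iff hc S), hff, maskFlat_eq_comp_blockPos]

/-- There are maps `Γ_1,…,Γ_{k-1} : [ℓ]^m → {0,1}^n` such that for every
`f : {0,1}^m → {-1,1}` and `f' : {0,1}^n → {-1,1}` with `f(z) = f'(z0^{n-m})`,
`F^f_k(x, S^1,…,S^{k-1}) = G^{f'}_k(x, Γ_1(S^1),…,Γ_{k-1}(S^{k-1}))` for all inputs,
where `F^f_k(x,S) = f(x ← S)` and `G^{f'}_k(x,y) = f'(x ⇐ y)`. -/
theorem statement2 (k ℓ m : ℕ) (hk : 2 ≤ k) (hℓ : 1 ≤ ℓ) (hm : 1 ≤ m)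
    (n : ℕ) (hn : n = ℓ ^ (k - 1) * m) :
    ∃ Γ : Fin (k - 1) → (Fin m → Fin ℓ) → (Fin n → Bool),
      ∀ (f : (Fin m → Bool) → ℝ) (f' : (Fin n → Bool) → ℝ),
        (∀ z, f z = 1 ∨ f z = -1) → (∀ w, f' w = 1 ∨ f' w = -1) →
        (∀ z, f z = f' (padZ m n z)) →
        ∀ (x : Fin n → Bool) (S : Fin (k - 1) → Fin m → Fin ℓ),
          f (maskFlat k ℓ m n hn x S) = f' (compress n (k - 1) x (fun i => Γ i (S i))) :=
  statement2_general k ℓ m n hn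
end

section
/- Let k ≥ 2, ℓ, m ≥ 1 be integers and fix S^1_0, S^1_1, …, S^{k−1}_0, S^{k−1}_1 ∈ [ℓ]^m. For u ∈ {0,1}^{k−1} define Z_u = {(α, S^1_{u_1}[α], …, S^{k−1}_{u_{k−1}}[α]) : α ∈ [m]} ⊆ [m] × [ℓ]^{k−1} and Y_u = {(α, S^1_{u_1}[α], …, S^{k−1}_{u_{k−1}}[α]) : α ∈ [m] such that S^j_0[α] ≠ S^j_1[α] for every j with u_j = 1}. Then: (i) the sets Y_u, u ∈ {0,1}^{k−1}, are pairwise disjoint; (ii) ∪_{u∈{0,1}^{k−1}} Y_u = ∪_{u∈{0,1}^{k−1}} Z_u =: Z; and (iii) |Z| ≥ 2^{k−1}m − (2^{k−1}−1)r, where r = Σ_{i=1}^{k−1} |{α ∈ [m] : S^i_0[α] = S^i_1[α]}|. -/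
open scoped BigOperators

/-- `Z_u = {(α, S^1_{u_1}[α], …, S^{k-1}_{u_{k-1}}[α]) : α ∈ [m]}`, the set of positions
(in `[m] × [ℓ]^{k-1}`) unmasked by the vectors selected by `u ∈ {0,1}^{k-1}`. -/
def Zu {K ℓ m : ℕ} (S0 S1 : Fin K → Fin m → Fin ℓ) (u : Fin K → Bool) :
    Finset (Fin m × (Fin K → Fin ℓ)) :=
  Finset.univ.image (fun α : Fin m => (α, fun j => (if u j then S1 j else S0 j) α))

/-- `Y_u = {(α, S^1_{u_1}[α], …, S^{k-1}_{u_{k-1}}[α]) : α such that S^j_0[α] ≠ S^j_1[α]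
for every j with u_j = 1}`. -/
def Yu {K ℓ m : ℕ} (S0 S1 : Fin K → Fin m → Fin ℓ) (u : Fin K → Bool) :
    Finset (Fin m × (Fin K → Fin ℓ)) :=
  (Finset.univ.filter (fun α : Fin m => ∀ j, u j = true → S0 j α ≠ S1 j α)).image
    (fun α : Fin m => (α, fun j => (if u j then S1 j else S0 j) α))

/-
A point of `Y_u` at `α` has coordinate `j` different from its `S^j_0`-value whenever `u_j = 1`,
so distinct `u` give distinct points and the `Y_u` are disjoint. Clearing in `u` the bits `j` with
`S^j_0[α] = S^j_1[α]` does not move the point of `Z_u` at `α` and puts it in `Y_{u'}` for the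
cleared `u'`, so `Z` is the disjoint union of the `Y_u`. Finally `|Y_u| ≥ m - r` since `Y_u` is indexed injectively by the `α`
outside the `r` coincidences, while `|Y_0| = m`.
-/

section

variable {K ℓ m : ℕ} (S0 S1 : Fin K → Fin m → Fin ℓ)

theorem Yu_disjoint {u v : Fin K → Bool} (huv : u ≠ v) :
    Disjoint (Yu S0 S1 u) (Yu S0 S1 v) := by
  rw [Finset.disjoint_left]
  rintro _ hu hv
  simp only [Yu, Finset.mem_image, Finset.mem_filter, Finset.mem_univ, true_and] at hu hv
  obtain ⟨α, hα, rfl⟩ := hu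
  obtain ⟨_, hβ, hpe⟩ := hv
  obtain ⟨rfl, hfe⟩ := Prod.mk.inj hpe
  obtain ⟨j, hj⟩ := Function.ne_iff.mp huv
  have hfj := congrFun hfe j
  cases hu' : u j <;> cases hv' : v j <;> simp [hu', hv'] at hj hfj
  · exact hβ j hv' hfj.symm
  · exact hα j hu' hfj

theorem biUnion_Yu_eq_biUnion_Zu :
    Finset.univ.biUnion (Yu S0 S1) = Finset.univ.biUnion (Zu S0 S1) := by
  refine le_antisymm (Finset.biUnion_mono fun u _ =>
    Finset.image_subset_image (Finset.filter_subset _ _)) ?_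
  intro p hp
  simp only [Zu, Finset.mem_biUnion, Finset.mem_image, Finset.mem_univ, true_and] at hp
  obtain ⟨u, α, rfl⟩ := hp
  simp only [Yu, Finset.mem_biUnion, Finset.mem_image, Finset.mem_filter, Finset.mem_univ,
    true_and]
  refine ⟨fun j => u j && !decide (S0 j α = S1 j α), α, fun j hj => by simp_all, ?_⟩
  congr 1
  funext j
  by_cases h : S0 j α = S1 j α <;> cases hu : u j <;> simp [h, hu]

theorem card_biUnion_Zu :
    (Finset.univ.biUnion (Zu S0 S1)).card = ∑ u, (Yu S0 S1 u).card := by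
  rw [← biUnion_Yu_eq_biUnion_Zu, Finset.card_biUnion fun u _ v _ huv => Yu_disjoint S0 S1 huv]

theorem card_Yu (u : Fin K → Bool) :
    (Yu S0 S1 u).card
      = (Finset.univ.filter fun α : Fin m => ∀ j, u j = true → S0 j α ≠ S1 j α).card :=
  Finset.card_image_of_injective _ fun _ _ h => congrArg Prod.fst h

theorem card_Yu_false : (Yu S0 S1 fun _ => false).card = m := by
  simp [card_Yu]

theorem le_card_Yu_add (u : Fin K → Bool) :
    m ≤ (Yu S0 S1 u).card + ∑ j, (Finset.univ.filter fun α : Fin m => S0 j α = S1 j α).card := by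
  have hbad : (Finset.univ.filter fun α : Fin m => ¬ ∀ j, u j = true → S0 j α ≠ S1 j α)
      ⊆ Finset.univ.biUnion fun j => Finset.univ.filter fun α : Fin m => S0 j α = S1 j α := by
    intro α hα
    simp only [Finset.mem_filter, Finset.mem_univ, true_and, not_forall, not_not] at hα
    obtain ⟨j, -, hj⟩ := hα
    simpa using ⟨j, hj⟩
  calc m = (Yu S0 S1 u).card
        + (Finset.univ.filter fun α : Fin m => ¬ ∀ j, u j = true → S0 j α ≠ S1 j α).card := by
        rw [card_Yu, Finset.card_filter_add_card_filter_not, Finset.card_univ, Fintype.card_fin]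
    _ ≤ _ := by grw [Finset.card_le_card hbad, Finset.card_biUnion_le]

theorem le_card_biUnion_Zu_add :
    2 ^ K * m ≤ (Finset.univ.biUnion (Zu S0 S1)).card
      + (2 ^ K - 1) * ∑ j, (Finset.univ.filter fun α : Fin m => S0 j α = S1 j α).card := by
  set r := ∑ j, (Finset.univ.filter fun α : Fin m => S0 j α = S1 j α).card
  set rest := Finset.univ.erase fun _ : Fin K => false
  have hrest : rest.card = 2 ^ K - 1 := by simp [rest, Finset.card_erase_of_mem]
  have hrest_le : rest.card • m ≤ ∑ u ∈ rest, ((Yu S0 S1 u).card + r) :=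
    Finset.card_nsmul_le_sum _ _ _ fun u _ => le_card_Yu_add S0 S1 u
  rw [card_biUnion_Zu, ← Finset.add_sum_erase _ _ (Finset.mem_univ fun _ => false),
    card_Yu_false]
  rw [Finset.sum_add_distrib, Finset.sum_const, hrest, smul_eq_mul, smul_eq_mul] at hrest_le
  have h2 : 2 ^ K = (2 ^ K - 1) + 1 := (Nat.sub_add_cancel Nat.one_le_two_pow).symm
  rw [h2, add_mul, one_mul, Nat.add_sub_cancel]
  lia

end

theorem statement8_general (k ℓ m : ℕ)
    (S0 S1 : Fin (k - 1) → Fin m → Fin ℓ)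
    (r : ℕ)
    (hr : r = ∑ i : Fin (k - 1),
      (Finset.univ.filter (fun α : Fin m => S0 i α = S1 i α)).card) :
    (∀ u v : Fin (k - 1) → Bool, u ≠ v → Disjoint (Yu S0 S1 u) (Yu S0 S1 v)) ∧
    Finset.univ.biUnion (Yu S0 S1) = Finset.univ.biUnion (Zu S0 S1) ∧
    ((Finset.univ.biUnion (Zu S0 S1)).card : ℤ) ≥
      2 ^ (k - 1) * m - (2 ^ (k - 1) - 1) * r := by
  refine ⟨fun u v => Yu_disjoint S0 S1, biUnion_Yu_eq_biUnion_Zu S0 S1, ?_⟩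
  have hZ := le_card_biUnion_Zu_add S0 S1
  rw [← hr] at hZ
  zify [Nat.one_le_two_pow] at hZ
  linarith

/-- (i) the `Y_u` are pairwise disjoint; (ii) `∪_u Y_u = ∪_u Z_u =: Z`;
(iii) `|Z| ≥ 2^{k-1}m − (2^{k-1}−1)r` where
`r = Σ_i |{α : S^i_0[α] = S^i_1[α]}|`. -/
theorem statement8 (k ℓ m : ℕ) (hk : 2 ≤ k) (hℓ : 1 ≤ ℓ) (hm : 1 ≤ m)
    (S0 S1 : Fin (k - 1) → Fin m → Fin ℓ)
    (r : ℕ)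
    (hr : r = ∑ i : Fin (k - 1),
      (Finset.univ.filter (fun α : Fin m => S0 i α = S1 i α)).card) :
    (∀ u v : Fin (k - 1) → Bool, u ≠ v → Disjoint (Yu S0 S1 u) (Yu S0 S1 v)) ∧
    Finset.univ.biUnion (Yu S0 S1) = Finset.univ.biUnion (Zu S0 S1) ∧
    ((Finset.univ.biUnion (Zu S0 S1)).card : ℤ) ≥
      2 ^ (k - 1) * m - (2 ^ (k - 1) - 1) * r :=
  statement8_general k ℓ m S0 S1 r hr
end

section
/- (Approximation/Orthogonality duality.) Let f : {0,1}^m → ℝ be a function whose δ-approximate degree equals d, with d ≥ 1. Then there exist a function g : {0,1}^m → {−1,1} and a probability distribution μ on {0,1}^m such that g is (μ,d)-orthogonal and Corr_μ(f,g) > δ. -/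
open scoped BigOperators

/-- The character `χ_S(x) = (-1)^{Σ_{i∈S} x_i}`. -/
noncomputable def chiChar {m : ℕ} (S : Finset (Fin m)) (z : Fin m → Bool) : ℝ :=
  ∏ i ∈ S, (if z i then (-1 : ℝ) else 1)

/-- `φ : {0,1}^m → ℝ` is (the evaluation of) a multilinear real polynomial of degree
at most `d`: a linear combination of the characters `χ_S` with `|S| ≤ d`. -/
def DegLE (m d : ℕ) (φ : (Fin m → Bool) → ℝ) : Prop :=
  ∃ c : Finset (Fin m) → ℝ,
    ∀ z, φ z = ∑ S ∈ Finset.univ.filter (fun S : Finset (Fin m) => S.card ≤ d),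
      c S * chiChar S z

/-- The `δ`-approximate degree of `f`: the least `d` such that some multilinear real
polynomial `φ` of degree at most `d` satisfies `|f(x) − φ(x)| ≤ δ` for all `x`. -/
noncomputable def approxDeg (m : ℕ) (δ : ℝ) (f : (Fin m → Bool) → ℝ) : ℕ :=
  sInf { d | ∃ φ, DegLE m d φ ∧ ∀ z, |f z - φ z| ≤ δ }

/-- `g` is `(μ,d)`-orthogonal: `E_{x∼μ}[g(x)χ_S(x)] = 0` for every `S` with `|S| < d`. -/
def Orthogonal {m : ℕ} (μ : (Fin m → Bool) → ℝ) (d : ℕ) (g : (Fin m → Bool) → ℝ) : Prop :=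
  ∀ S : Finset (Fin m), S.card < d → ∑ z, μ z * g z * chiChar S z = 0

/-!
Let `V` be the span of the characters `χ_S` with `|S| < d`. Since `deg_δ(f) = d`, the sup-norm
distance from `f` to `V` exceeds `δ ≥ 0`. By Hahn–Banach there is a functional of norm at most one
on `({0,1}^m → ℝ, ‖·‖_∞)` that vanishes on `V` and equals that distance at `f`. On a finite set such
a functional is a signed measure `p` with `‖p‖₁ ≤ 1`, and its polar decomposition
`p = ‖p‖₁ • μ • g`, with `μ = |p| / ‖p‖₁` and `g = ±1` the sign of `p`, gives the required pair.
-/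

open Metric

theorem exists_strongDual_norm_le_one_eq_infDist {E : Type*} [SeminormedAddCommGroup E]
    [NormedSpace ℝ E] (V : Submodule ℝ E) (f : E) :
    ∃ L : StrongDual ℝ E, ‖L‖ ≤ 1 ∧ (∀ v ∈ V, L v = 0) ∧ L f = infDist f V := by
  obtain ⟨G, hG, hGf⟩ := exists_dual_vector'' ℝ (V.mkQ f)
  refine ⟨G.comp V.mkQL, ?_, fun v hv => ?_, ?_⟩
  · refine ContinuousLinearMap.opNorm_le_bound _ zero_le_one fun x => ?_
    calc ‖G (V.mkQ x)‖ ≤ ‖G‖ * ‖V.mkQ x‖ := G.le_opNorm _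
      _ ≤ 1 * ‖x‖ := mul_le_mul hG (Submodule.Quotient.norm_mk_le V x) (norm_nonneg _) zero_le_one
  · simp [(Submodule.Quotient.mk_eq_zero V).2 hv]
  · simpa using hGf.trans (QuotientAddGroup.norm_mk (S := V.toAddSubgroup) f)

section FiniteSupNorm

variable {D : Type*} [Fintype D]

theorem LinearMap.apply_eq_sum_mul_apply_single [DecidableEq D] (L : (D → ℝ) →ₗ[ℝ] ℝ)
    (x : D → ℝ) : L x = ∑ z, x z * L (Pi.single z 1) := by
  rw [L.pi_apply_eq_sum_univ x]
  refine Finset.sum_congr rfl fun z _ => ?_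
  congr 2
  ext j
  simp [Pi.single_apply, eq_comm]

theorem sum_abs_apply_single_le_norm [DecidableEq D] (L : StrongDual ℝ (D → ℝ)) :
    ∑ z, |L (Pi.single z 1)| ≤ ‖L‖ := by
  set x : D → ℝ := fun z => SignType.sign (L (Pi.single z 1))
  have hx : ‖x‖ ≤ 1 :=
    (pi_norm_le_iff_of_nonneg zero_le_one).2 fun z => by
      rcases SignType.trichotomy (SignType.sign (L (Pi.single z 1))) with h | h | h <;> simp [x, h]
  calc ∑ z, |L (Pi.single z 1)| = L x := by
        rw [← ContinuousLinearMap.coe_coe, LinearMap.apply_eq_sum_mul_apply_single]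
        exact Finset.sum_congr rfl fun z _ => by rw [mul_comm, ← self_mul_sign]; rfl
    _ ≤ ‖L x‖ := Real.le_norm_self _
    _ ≤ ‖L‖ * ‖x‖ := L.le_opNorm x
    _ ≤ ‖L‖ := mul_le_of_le_one_right (norm_nonneg L) hx

theorem sum_abs_pos_of_ne_zero {p : D → ℝ} (hp : p ≠ 0) : 0 < ∑ z, |p z| := by
  obtain ⟨z, hz⟩ := Function.ne_iff.1 hp
  exact Finset.sum_pos' (fun y _ => abs_nonneg _) ⟨z, Finset.mem_univ _, abs_pos.2 hz⟩

theorem exists_sign_mul_prob_eq_div_sum_abs (p : D → ℝ) (hp : p ≠ 0) :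
    ∃ g μ : D → ℝ, (∀ z, g z = 1 ∨ g z = -1) ∧ IsProbDist μ ∧
      ∀ z, μ z * g z = p z / ∑ y, |p y| := by
  have hs := sum_abs_pos_of_ne_zero hp
  refine ⟨fun z => if p z < 0 then -1 else 1, fun z => |p z| / ∑ y, |p y|,
    fun z => by dsimp only; split_ifs <;> simp, ⟨fun z => by positivity, ?_⟩, fun z => ?_⟩
  · rw [← Finset.sum_div, div_self hs.ne']
  · dsimp only
    rw [div_mul_eq_mul_div]
    split_ifs with h
    · rw [abs_of_neg h, neg_mul_neg, mul_one]
    · rw [abs_of_nonneg (not_lt.1 h), mul_one]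

theorem exists_sign_prob_orthogonal_infDist_le_corr (V : Submodule ℝ (D → ℝ)) (f : D → ℝ)
    (hf : 0 < infDist f V) :
    ∃ g μ : D → ℝ, (∀ z, g z = 1 ∨ g z = -1) ∧ IsProbDist μ ∧
      (∀ v ∈ V, ∑ z, μ z * g z * v z = 0) ∧ infDist f V ≤ ∑ z, μ z * f z * g z := by
  classical
  obtain ⟨L, hL1, hLV, hLf⟩ := exists_strongDual_norm_le_one_eq_infDist V f
  set p : D → ℝ := fun z => L (Pi.single z 1)
  have hLp (x : D → ℝ) : L x = ∑ z, x z * p z :=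
    (L : (D → ℝ) →ₗ[ℝ] ℝ).apply_eq_sum_mul_apply_single x
  have hp : p ≠ 0 := by
    intro h
    simp [hLp, h] at hLf
    linarith
  obtain ⟨g, μ, hg, hμ, hμg⟩ := exists_sign_mul_prob_eq_div_sum_abs p hp
  have hmean (x : D → ℝ) : ∑ z, μ z * g z * x z = L x / ∑ y, |p y| := by
    rw [hLp, Finset.sum_div]
    exact Finset.sum_congr rfl fun z _ => by rw [hμg]; ring
  refine ⟨g, μ, hg, hμ, fun v hv => by rw [hmean, hLV v hv, zero_div], ?_⟩
  calc infDist f V = L f := hLf.symm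
    _ ≤ L f / ∑ y, |p y| :=
      le_div_self (hLf ▸ hf.le) (sum_abs_pos_of_ne_zero hp)
        ((sum_abs_apply_single_le_norm L).trans hL1)
    _ = ∑ z, μ z * f z * g z := by
      rw [← hmean]
      exact Finset.sum_congr rfl fun z _ => by ring

end FiniteSupNorm

def charSpan (m d : ℕ) : Submodule ℝ ((Fin m → Bool) → ℝ) :=
  Submodule.span ℝ (Set.range fun S : {S : Finset (Fin m) // S.card < d} => chiChar S.1)

theorem chiChar_mem_charSpan {m d : ℕ} {S : Finset (Fin m)} (hS : S.card < d) :
    chiChar S ∈ charSpan m d :=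
  Submodule.subset_span ⟨⟨S, hS⟩, rfl⟩

theorem degLE_of_mem_charSpan {m n : ℕ} {v : (Fin m → Bool) → ℝ} (hv : v ∈ charSpan m (n + 1)) :
    DegLE m n v := by
  classical
  obtain ⟨c, rfl⟩ := (Submodule.mem_span_range_iff_exists_fun ℝ).1 hv
  refine ⟨fun S => if h : S.card < n + 1 then c ⟨S, h⟩ else 0, fun z => ?_⟩
  rw [Finset.sum_apply, Finset.sum_subtype (p := fun S : Finset (Fin m) => S.card < n + 1) _
    (fun S => by simp)]
  exact Finset.sum_congr rfl fun S _ => by simp [S.2]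

theorem nonneg_of_approxDeg_ne_zero {m : ℕ} {δ : ℝ} {f : (Fin m → Bool) → ℝ}
    (h : approxDeg m δ f ≠ 0) : 0 ≤ δ := by
  obtain ⟨d, φ, -, hφ⟩ : { d | ∃ φ, DegLE m d φ ∧ ∀ z, |f z - φ z| ≤ δ }.Nonempty :=
    Set.nonempty_iff_ne_empty.2 fun hempty => h (by rw [approxDeg, hempty, Nat.sInf_empty])
  exact (abs_nonneg _).trans (hφ fun _ => false)

theorem lt_infDist_charSpan_of_lt_approxDeg {m n : ℕ} {δ : ℝ} {f : (Fin m → Bool) → ℝ}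
    (h : n < approxDeg m δ f) : δ < infDist f (charSpan m (n + 1)) := by
  obtain ⟨v, hv, hfv⟩ := (Submodule.closed_of_finiteDimensional (charSpan m (n + 1)))
    |>.exists_infDist_eq_dist ⟨0, Submodule.zero_mem _⟩ f
  rw [hfv]
  by_contra! hle
  refine Nat.notMem_of_lt_sInf h ⟨v, degLE_of_mem_charSpan hv, fun z => ?_⟩
  rw [← Real.dist_eq]
  exact (dist_le_pi_dist f v z).trans hle

/-- Approximation/Orthogonality duality: if `deg_δ(f) = d ≥ 1`, then there are a
function `g : {0,1}^m → {-1,1}` and a probability distribution `μ` on `{0,1}^m` such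
that `g` is `(μ,d)`-orthogonal and `Corr_μ(f,g) > δ`. -/
theorem statement9 (m d : ℕ) (δ : ℝ) (f : (Fin m → Bool) → ℝ)
    (hdeg : approxDeg m δ f = d) (hd : 1 ≤ d) :
    ∃ (g : (Fin m → Bool) → ℝ) (μ : (Fin m → Bool) → ℝ),
      (∀ z, g z = 1 ∨ g z = -1) ∧ IsProbDist μ ∧ Orthogonal μ d g ∧
      δ < ∑ z, μ z * f z * g z := by
  obtain ⟨n, rfl⟩ : ∃ n, d = n + 1 := ⟨d - 1, by omega⟩
  have hδ : 0 ≤ δ := nonneg_of_approxDeg_ne_zero (f := f) (by omega)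
  have hfar : δ < infDist f (charSpan m (n + 1)) := lt_infDist_charSpan_of_lt_approxDeg (by omega)
  obtain ⟨g, μ, hg, hμ, horth, hcorr⟩ :=
    exists_sign_prob_orthogonal_infDist_le_corr (charSpan m (n + 1)) f (hδ.trans_lt hfar)
  exact ⟨g, μ, hg, hμ, fun S hS => horth _ (chiChar_mem_charSpan hS), hfar.trans_le hcorr⟩
end
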